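/- For all integers n ≥ 3 and 1 ≤ k ≤ n, the wheel W_n satisfies cc_k(W_n) = k. -/

import Mathlib

/-!
Colour the rim edge `{i, i + 1}` of `W_n` with `min i (k - 1)` and give the spoke to `i + 1` the
same colour, so that exactly `k` colours occur. For rim vertices `a ≠ b`, the Hamiltonian path that
runs from `a` backwards along the rim to `b + 1`, crosses the hub to `a + 1` and runs forwards to
`b` misses only the rim edges `{a, a + 1}` and `{b, b + 1}`, and it picks up their colours on its
two spokes; from the hub, the spoke to `b + 1` followed by the rim path to `b` works the same way.
So every pair of vertices is joined by a path showing all `k` colours. Conversely, a `k`-colour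
connecting colouring shows `k` colours on a single path, so it uses at least `k` colours.
-/

open SimpleGraph

/-- `c` is a `k`-color connecting edge-coloring of `G`: between every pair of distinct
vertices there is a path whose edges use at least `k` different colors. -/
def SimpleGraph.IsKColorConnecting {V : Type*} (G : SimpleGraph V) (k : ℕ)
    (c : Sym2 V → ℕ) : Prop :=
  ∀ u v : V, u ≠ v → ∃ p : G.Walk u v, p.IsPath ∧ k ≤ (p.edges.map c).toFinset.card

/-- `G` is `k`-color connectable: it admits a `k`-color connecting coloring. -/
def SimpleGraph.KColorConnectable {V : Type*} (G : SimpleGraph V) (k : ℕ) : Prop :=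
  ∃ c : Sym2 V → ℕ, G.IsKColorConnecting k c

/-- The `k`-color connection number `cc_k(G)`: the minimum number of colors used on the
edges of `G` by a `k`-color connecting coloring. -/
noncomputable def SimpleGraph.ccConn {V : Type*} (G : SimpleGraph V) (k : ℕ) : ℕ :=
  sInf {n : ℕ | ∃ c : Sym2 V → ℕ, G.IsKColorConnecting k c ∧ (c '' G.edgeSet).ncard = n}

/-- The wheel `W n`: the cycle `C n` together with a new hub vertex (`none`) adjacent to
every vertex of the cycle. -/
def wheelGraph (n : ℕ) : SimpleGraph (Option (Fin n)) :=
  SimpleGraph.fromRel fun a b =>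
    a = none ∨ ∃ x y : Fin n, a = some x ∧ b = some y ∧ (cycleGraph n).Adj x y

namespace SimpleGraph

variable {V : Type*} {G : SimpleGraph V} {k : ℕ} {c : Sym2 V → ℕ}

lemma IsKColorConnecting.le_ncard_image [Finite V] [Nontrivial V]
    (h : G.IsKColorConnecting k c) : k ≤ (c '' G.edgeSet).ncard := by
  obtain ⟨u, v, huv⟩ := exists_pair_ne V
  obtain ⟨p, -, hp⟩ := h u v huv
  have hsub : ((p.edges.map c).toFinset : Set ℕ) ⊆ c '' G.edgeSet := by
    intro x hx
    obtain ⟨e, he, rfl⟩ := List.mem_map.1 (List.mem_toFinset.1 hx)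
    exact ⟨e, p.edges_subset_edgeSet he, rfl⟩
  calc k ≤ (p.edges.map c).toFinset.card := hp
    _ = ((p.edges.map c).toFinset : Set ℕ).ncard := (Set.ncard_coe_finset _).symm
    _ ≤ (c '' G.edgeSet).ncard := Set.ncard_le_ncard hsub (Set.toFinite _)

lemma ccConn_eq_of_isKColorConnecting [Finite V] [Nontrivial V]
    (h : G.IsKColorConnecting k c) (hc : (c '' G.edgeSet).ncard = k) : G.ccConn k = k :=
  le_antisymm (Nat.sInf_le ⟨c, h, hc⟩) <| le_csInf ⟨k, c, h, hc⟩ <| by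
    rintro _ ⟨c', h', rfl⟩
    exact h'.le_ncard_image

end SimpleGraph

open Fin.NatCast Fin.CommRing

namespace Fin

variable {n : ℕ} [NeZero n]

lemma val_one_of_two_le (hn : 2 ≤ n) : ((1 : Fin n) : ℕ) = 1 := by
  rw [Fin.val_one', Nat.mod_eq_of_lt hn]

lemma two_ne_zero_of_three_le (hn : 3 ≤ n) : (2 : Fin n) ≠ 0 := by
  intro h
  simpa [Nat.mod_eq_of_lt (show 2 < n by omega)] using congrArg Fin.val h

lemma add_natCast_val_sub (a b : Fin n) : b + (((a - b : Fin n) : ℕ) : Fin n) = a := by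
  rw [Fin.cast_val_eq_self, add_sub_cancel]

lemma nodup_map_range_add (x : Fin n) {m : ℕ} (hm : m ≤ n) :
    ((List.range m).map fun j : ℕ => x + j).Nodup := by
  refine List.nodup_range.map_on fun i hi j hj hij => ?_
  simp only [List.mem_range] at hi hj
  simpa [Fin.val_cast_of_lt (hi.trans_le hm), Fin.val_cast_of_lt (hj.trans_le hm)] using
    congrArg Fin.val (add_left_cancel hij)

end Fin

section Wheel

variable {n : ℕ} [NeZero n]

lemma wheelGraph_adj_none_some (i : Fin n) : (wheelGraph n).Adj none (some i) := by
  simp [wheelGraph]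

lemma wheelGraph_adj_some_add_one (hn : 2 ≤ n) (i : Fin n) :
    (wheelGraph n).Adj (some i) (some (i + 1)) := by
  have h1 := Fin.val_one_of_two_le hn
  have hne : i ≠ i + 1 := fun h => by simp [← Fin.val_eq_val] at h; omega
  simp only [wheelGraph, fromRel_adj, ne_eq, Option.some.injEq]
  refine ⟨hne, Or.inl (Or.inr ⟨i, i + 1, rfl, rfl, ?_⟩)⟩
  rw [cycleGraph_adj', add_sub_cancel_left, h1]
  exact Or.inr rfl

lemma eq_add_one_or_eq_add_one_of_wheelGraph_adj (hn : 2 ≤ n) {i j : Fin n}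
    (h : (wheelGraph n).Adj (some i) (some j)) : j = i + 1 ∨ i = j + 1 := by
  have hcyc : (cycleGraph n).Adj i j := by
    simp only [wheelGraph, fromRel_adj, reduceCtorEq, Option.some.injEq, false_or] at h
    rcases h.2 with ⟨x, y, rfl, rfl, hxy⟩ | ⟨x, y, rfl, rfl, hxy⟩
    exacts [hxy, hxy.symm]
  rw [cycleGraph_adj', ← Fin.val_one_of_two_le hn, Fin.val_inj, Fin.val_inj,
    sub_eq_iff_eq_add', sub_eq_iff_eq_add'] at hcyc
  exact hcyc.symm

end Wheel

section Coloring

variable {n : ℕ} [NeZero n]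

/-- `f i` colours both the rim edge `{i, i + 1}` and the spoke to `i + 1`. The rim case is a sum
so that it is symmetric for every `n`; for `n ≥ 3` at most one summand is nonzero. -/
def wheelColoringAux (f : Fin n → ℕ) : Option (Fin n) → Option (Fin n) → ℕ
  | none, none => 0
  | none, some i | some i, none => f (i - 1)
  | some i, some j => (if j = i + 1 then f i else 0) + (if i = j + 1 then f j else 0)

lemma wheelColoringAux_comm (f : Fin n → ℕ) (u v : Option (Fin n)) :
    wheelColoringAux f u v = wheelColoringAux f v u := by
  cases u <;> cases v <;> simp only [wheelColoringAux, Nat.add_comm]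

def wheelColoring (f : Fin n → ℕ) : Sym2 (Option (Fin n)) → ℕ :=
  Sym2.lift ⟨wheelColoringAux f, wheelColoringAux_comm f⟩

variable (f : Fin n → ℕ)

@[simp]
lemma wheelColoring_spoke (i : Fin n) : wheelColoring f s(none, some i) = f (i - 1) := rfl

lemma wheelColoring_rim (hn : 3 ≤ n) (i : Fin n) :
    wheelColoring f s(some i, some (i + 1)) = f i := by
  have hne : i ≠ i + 1 + 1 := fun h => Fin.two_ne_zero_of_three_le hn <| by
    linear_combination -h
  simp [wheelColoring, wheelColoringAux, hne]

lemma wheelColoring_image (hn : 3 ≤ n) :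
    wheelColoring f '' (wheelGraph n).edgeSet = Set.range f := by
  refine subset_antisymm ?_ ?_
  · rintro _ ⟨e, he, rfl⟩
    induction e with
    | h u v =>
      rcases u with _ | i <;> rcases v with _ | j
      · exact ((wheelGraph n).irrefl he).elim
      · exact ⟨j - 1, rfl⟩
      · exact ⟨i - 1, rfl⟩
      · rcases eq_add_one_or_eq_add_one_of_wheelGraph_adj (by omega) he with rfl | rfl
        · exact ⟨i, (wheelColoring_rim f hn i).symm⟩
        · exact ⟨j, by rw [Sym2.eq_swap, wheelColoring_rim f hn]⟩
  · rintro _ ⟨i, rfl⟩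
    exact ⟨_, wheelGraph_adj_some_add_one (by omega) i, wheelColoring_rim f hn i⟩

end Coloring

section Walks

variable {n : ℕ} [NeZero n] (hn : 2 ≤ n)

def rimWalk : (x : Fin n) → (m : ℕ) → (wheelGraph n).Walk (some x) (some (x + m))
  | x, 0 => Walk.nil.copy rfl (by simp)
  | x, m + 1 => Walk.cons (wheelGraph_adj_some_add_one hn x)
      ((rimWalk (x + 1) m).copy rfl (by push_cast; ring_nf))

def hubRimWalk (x : Fin n) (m : ℕ) : (wheelGraph n).Walk none (some (x + m)) :=
  Walk.cons (wheelGraph_adj_none_some x) (rimWalk hn x m)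

/-- From `b + 1 + d` back along the rim to `b + 1`, across the hub to `b + d + 2`, and then
`m` steps forward along the rim. -/
def rimPairWalk (b : Fin n) (d m : ℕ) :
    (wheelGraph n).Walk (some (b + 1 + d)) (some (b + 1 + d + 1 + m)) :=
  (hubRimWalk hn (b + 1) d).reverse.append (hubRimWalk hn (b + 1 + d + 1) m)

lemma rimWalk_support (x : Fin n) (m : ℕ) :
    (rimWalk hn x m).support = ((List.range (m + 1)).map fun j : ℕ => x + j).map some := by
  induction m generalizing x with
  | zero => simp [rimWalk]
  | succ m ih =>
    rw [rimWalk, Walk.support_cons, Walk.support_copy, ih]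
    conv_rhs => rw [List.range_succ_eq_map]
    simp only [List.map_cons, List.map_map, Nat.cast_zero, add_zero]
    congr 1
    refine List.map_congr_left fun j _ => ?_
    simp only [Function.comp_apply, Nat.cast_succ]
    ring_nf

lemma rimWalk_edges (x : Fin n) (m : ℕ) :
    (rimWalk hn x m).edges = (List.range m).map fun j : ℕ => s(some (x + j), some (x + j + 1)) := by
  induction m generalizing x with
  | zero => simp [rimWalk]
  | succ m ih =>
    rw [rimWalk, Walk.edges_cons, Walk.edges_copy, ih]
    conv_rhs => rw [List.range_succ_eq_map]
    simp only [List.map_cons, List.map_map, Nat.cast_zero, add_zero]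
    congr 1
    refine List.map_congr_left fun j _ => ?_
    simp only [Function.comp_apply, Nat.cast_succ]
    ring_nf

lemma hubRimWalk_support (x : Fin n) (m : ℕ) :
    (hubRimWalk hn x m).support = none :: ((List.range (m + 1)).map fun j : ℕ => x + j).map some := by
  rw [hubRimWalk, Walk.support_cons, rimWalk_support]

lemma hubRimWalk_isPath (x : Fin n) {m : ℕ} (hm : m < n) : (hubRimWalk hn x m).IsPath := by
  rw [Walk.isPath_def, hubRimWalk_support]
  exact List.nodup_cons.2 ⟨by simp, (Fin.nodup_map_range_add x hm).map (Option.some_injective _)⟩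

lemma rimPairWalk_isPath (b : Fin n) {d m : ℕ} (hdm : d + m + 2 ≤ n) :
    (rimPairWalk hn b d m).IsPath := by
  have hperm : (rimPairWalk hn b d m).support.Perm
      (none :: ((List.range (d + 1 + (m + 1))).map fun j : ℕ => b + 1 + j).map some) := by
    rw [rimPairWalk, Walk.support_append, Walk.support_reverse, hubRimWalk_support,
      hubRimWalk_support, List.range_add (n := d + 1)]
    simp only [List.reverse_cons, List.tail_cons, List.append_assoc, List.singleton_append,
      List.map_append, List.map_map]
    refine List.perm_middle.trans (List.Perm.cons _ (List.Perm.append (List.reverse_perm _) ?_))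
    refine .of_eq (List.map_congr_left fun j _ => ?_)
    simp only [Function.comp_apply, Nat.cast_add, Nat.cast_one]
    ring_nf
  rw [Walk.isPath_def, hperm.nodup_iff]
  exact List.nodup_cons.2 ⟨by simp, (Fin.nodup_map_range_add _ (by omega)).map (Option.some_injective _)⟩

end Walks

section Colors

variable {n : ℕ} [NeZero n] (f : Fin n → ℕ)

lemma mem_map_edges_hubRimWalk (hn : 3 ≤ n) (y : Fin n) {m i : ℕ} (hi : i ≤ m) :
    f (y + i) ∈ (hubRimWalk (by omega) (y + 1) m).edges.map (wheelColoring f) := by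
  rw [hubRimWalk, Walk.edges_cons, rimWalk_edges]
  rcases i with _ | i
  · exact List.mem_map.2 ⟨_, List.mem_cons_self, by simp⟩
  · refine List.mem_map.2 ⟨_, List.mem_cons_of_mem _
      (List.mem_map.2 ⟨i, List.mem_range.2 (by omega), rfl⟩), ?_⟩
    rw [wheelColoring_rim f hn]
    push_cast
    ring_nf

lemma mem_map_edges_rimPairWalk (hn : 3 ≤ n) (b : Fin n) {d m i : ℕ} (hi : i ≤ d + 1 + m) :
    f (b + i) ∈ (rimPairWalk (by omega) b d m).edges.map (wheelColoring f) := by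
  rw [rimPairWalk, Walk.edges_append, Walk.edges_reverse, List.map_append, List.map_reverse,
    List.mem_append, List.mem_reverse]
  rcases le_or_gt i d with hid | hid
  · exact .inl (mem_map_edges_hubRimWalk f hn b hid)
  · obtain ⟨i, rfl⟩ := Nat.exists_eq_add_of_lt hid
    convert Or.inr (mem_map_edges_hubRimWalk f hn (b + 1 + d) (m := m) (i := i) (by omega)) using 3
    push_cast
    ring

lemma exists_isPath_none_some (hn : 3 ≤ n) (b : Fin n) : ∃ p : (wheelGraph n).Walk none (some b),
    p.IsPath ∧ ∀ i, f i ∈ p.edges.map (wheelColoring f) := by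
  have hb : b + 1 + ((n - 1 : ℕ) : Fin n) = b := by
    have h : ((1 + (n - 1) : ℕ) : Fin n) = 0 := by
      rw [Nat.add_sub_cancel' (by omega), Fin.natCast_self]
    push_cast at h
    linear_combination h
  refine ⟨(hubRimWalk (by omega) (b + 1) (n - 1)).copy rfl (congrArg some hb),
    (Walk.isPath_copy _ _ _).2 (hubRimWalk_isPath _ _ (by omega)), fun i => ?_⟩
  rw [Walk.edges_copy, ← Fin.add_natCast_val_sub i b]
  exact mem_map_edges_hubRimWalk f hn b (by omega)

lemma exists_isPath_some_some (hn : 3 ≤ n) {a b : Fin n} (hab : a ≠ b) :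
    ∃ p : (wheelGraph n).Walk (some a) (some b),
      p.IsPath ∧ ∀ i, f i ∈ p.edges.map (wheelColoring f) := by
  obtain ⟨d, hd, rfl⟩ : ∃ d : ℕ, d + 2 ≤ n ∧ b + 1 + d = a := by
    have hpos : (a - b : Fin n).val ≠ 0 := by simpa [Fin.val_eq_zero_iff, sub_eq_zero] using hab
    refine ⟨(a - b : Fin n).val - 1, by omega, ?_⟩
    calc b + 1 + (((a - b : Fin n).val - 1 : ℕ) : Fin n)
        = b + ((1 + ((a - b : Fin n).val - 1) : ℕ) : Fin n) := by push_cast; ring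
      _ = a := by rw [Nat.add_sub_cancel' (by omega), Fin.add_natCast_val_sub]
  have hend : b + 1 + d + 1 + ((n - 2 - d : ℕ) : Fin n) = b := by
    have h : ((1 + d + 1 + (n - 2 - d) : ℕ) : Fin n) = 0 := by
      rw [show 1 + d + 1 + (n - 2 - d) = n by omega, Fin.natCast_self]
    push_cast at h
    linear_combination h
  refine ⟨(rimPairWalk (by omega) b d (n - 2 - d)).copy rfl (congrArg some hend),
    (Walk.isPath_copy _ _ _).2 (rimPairWalk_isPath _ b (by omega)), fun i => ?_⟩
  rw [Walk.edges_copy, ← Fin.add_natCast_val_sub i b]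
  exact mem_map_edges_rimPairWalk f hn b (by omega)

end Colors

section Connecting

variable {n : ℕ} [NeZero n] (f : Fin n → ℕ)

lemma exists_isPath_forall_mem_map_edges (hn : 3 ≤ n) {u v : Option (Fin n)} (huv : u ≠ v) :
    ∃ p : (wheelGraph n).Walk u v, p.IsPath ∧ ∀ i, f i ∈ p.edges.map (wheelColoring f) := by
  rcases u with _ | a <;> rcases v with _ | b
  · exact absurd rfl huv
  · exact exists_isPath_none_some f hn b
  · obtain ⟨p, hp, hcol⟩ := exists_isPath_none_some f hn a
    refine ⟨p.reverse, hp.reverse, fun i => ?_⟩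
    simpa only [Walk.edges_reverse, List.map_reverse, List.mem_reverse] using hcol i
  · exact exists_isPath_some_some f hn fun hab => huv (congrArg some hab)

lemma isKColorConnecting_wheelColoring (hn : 3 ≤ n) :
    (wheelGraph n).IsKColorConnecting (Set.range f).ncard (wheelColoring f) := by
  intro u v huv
  obtain ⟨p, hp, hcol⟩ := exists_isPath_forall_mem_map_edges f hn huv
  have hsub : Set.range f ⊆ ((p.edges.map (wheelColoring f)).toFinset : Set ℕ) := by
    rintro _ ⟨i, rfl⟩
    simpa using hcol i
  exact ⟨p, hp, (Set.ncard_le_ncard hsub (Finset.finite_toSet _)).trans_eq (Set.ncard_coe_finset _)⟩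

end Connecting

theorem stmt_5 (n k : ℕ) (hn : 3 ≤ n) (hk : 1 ≤ k) (hkn : k ≤ n) :
    (wheelGraph n).KColorConnectable k ∧ (wheelGraph n).ccConn k = k := by
  have : NeZero n := ⟨by omega⟩
  let f : Fin n → ℕ := fun i => min i.val (k - 1)
  have hrange : Set.range f = Set.Iio k := by
    ext j
    refine ⟨?_, fun hj => ⟨⟨j, by simp only [Set.mem_Iio] at hj; omega⟩, by simp only [Set.mem_Iio] at hj; simp only [f]; omega⟩⟩
    rintro ⟨i, rfl⟩
    simp only [Set.mem_Iio, f]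
    omega
  have hcard : (Set.range f).ncard = k := by
    rw [hrange, ← Finset.coe_Iio, Set.ncard_coe_finset, Nat.card_Iio]
  have hconn := isKColorConnecting_wheelColoring f hn
  rw [hcard] at hconn
  exact ⟨⟨_, hconn⟩,
    ccConn_eq_of_isKColorConnecting hconn (by rw [wheelColoring_image f hn, hcard])⟩
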